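/- arXiv:2103.04157 — 2 statements merged into one kernel-verified Lean document; each statement's English description precedes it below -/
import Mathlib

section
/- The ℤ-linear maps φ, ψ: L → L determined by φ: u ↦ u, v ↦ v+py, x ↦ x−pu, y ↦ y (identity on z, t and the two ℤ⁸ factors) and ψ: u ↦ u, v ↦ v+qt, x ↦ x−nz+qnu, y ↦ y, z ↦ z−qu, t ↦ t+ny (identity on the two ℤ⁸ factors) are isometries of (L,Q); moreover their ℝ-linear extensions satisfy φ(f_i(s,r)) = f_i(s+p,r) and ψ(f_i(s,r)) = f_i(s+nr,r+q) for i = 1,2,3 and all (s,r) ∈ ℝ². -/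
/-!
`φ` and `ψ` fix both `E8` summands, so they are isometries of `L` as soon as they preserve the
hyperbolic form of `U ⊕ U ⊕ U`, which is a polynomial identity valid over any commutative ring.
The transformation rules for the `fᵢ` are then coordinatewise arithmetic.
-/

open scoped BigOperators

/-- The Cartan matrix of E8 (Bourbaki numbering, 0-indexed): diagonal entries 2,
entry -1 exactly for the edges of the E8 Dynkin diagram. -/
def E8Cartan : Matrix (Fin 8) (Fin 8) ℤ :=
  !![ 2,  0, -1,  0,  0,  0,  0,  0;
      0,  2,  0, -1,  0,  0,  0,  0;
     -1,  0,  2, -1,  0,  0,  0,  0;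
      0, -1, -1,  2, -1,  0,  0,  0;
      0,  0,  0, -1,  2, -1,  0,  0;
      0,  0,  0,  0, -1,  2, -1,  0;
      0,  0,  0,  0,  0, -1,  2, -1;
      0,  0,  0,  0,  0,  0, -1,  2]

/-- Integer value `dᵀ C d'` of the E8 Cartan pairing. -/
def pairCZ (d d' : Fin 8 → ℤ) : ℤ := ∑ i, ∑ j, d i * E8Cartan i j * d' j

/-- Real value `wᵀ C w'` of the (real extension of the) E8 Cartan pairing. -/
def pairCR (w w' : Fin 8 → ℝ) : ℝ := ∑ i, ∑ j, w i * (E8Cartan i j : ℝ) * w' j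

/-- The `−E8` pairing, real coefficients. -/
def innE8R (w w' : Fin 8 → ℝ) : ℝ := -pairCR w w'

/-- The `−E8` pairing, integer coefficients. -/
def innE8Z (d d' : Fin 8 → ℤ) : ℤ := -pairCZ d d'

/-- The K3 lattice `L = ℤ⁶ ⊕ ℤ⁸ ⊕ ℤ⁸`. -/
abbrev LZ := (Fin 6 → ℤ) × (Fin 8 → ℤ) × (Fin 8 → ℤ)

/-- `L_ℝ = ℝ⁶ ⊕ ℝ⁸ ⊕ ℝ⁸`. -/
abbrev LR := (Fin 6 → ℝ) × (Fin 8 → ℝ) × (Fin 8 → ℝ)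

/-- The K3 bilinear form `Q` (integer version).  Coordinates `0,…,5` of the first
factor are `u, v, x, y, z, t`; one has `Q(u,v) = Q(x,y) = Q(z,t) = 1`, all other
pairings among `u,…,t` vanish, each `ℤ⁸` factor carries `−C`, and the three
factors are mutually orthogonal. -/
def QZ (d d' : LZ) : ℤ :=
  (d.1 0 * d'.1 1 + d.1 1 * d'.1 0 + d.1 2 * d'.1 3 + d.1 3 * d'.1 2
    + d.1 4 * d'.1 5 + d.1 5 * d'.1 4)
  - pairCZ d.2.1 d'.2.1 - pairCZ d.2.2 d'.2.2

/-- The K3 bilinear form `Q`, extended `ℝ`-bilinearly to `L_ℝ`. -/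
def QR (w w' : LR) : ℝ :=
  (w.1 0 * w'.1 1 + w.1 1 * w'.1 0 + w.1 2 * w'.1 3 + w.1 3 * w'.1 2
    + w.1 4 * w'.1 5 + w.1 5 * w'.1 4)
  - pairCR w.2.1 w'.2.1 - pairCR w.2.2 w'.2.2

/-- The inclusion `L → L_ℝ`. -/
def incl (d : LZ) : LR :=
  (fun i => (d.1 i : ℝ), fun i => (d.2.1 i : ℝ), fun i => (d.2.2 i : ℝ))

/-- The family of 45 real numbers `1`, `eᵢ` (`1 ≤ i ≤ 8`) and `eᵢ·eⱼ` (`1 ≤ i ≤ j ≤ 8`). -/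
def fam45 (e : Fin 8 → ℝ) : Option (Fin 8 ⊕ {p : Fin 8 × Fin 8 // p.1 ≤ p.2}) → ℝ
  | none => 1
  | some (Sum.inl i) => e i
  | some (Sum.inr p) => e p.1.1 * e p.1.2

/-- `φ` on the `ℤ⁶`/`ℝ⁶` factor: `u ↦ u`, `v ↦ v + p·y`, `x ↦ x − p·u`, `y ↦ y`,
`z ↦ z`, `t ↦ t` (in coordinates). -/
def phi6 (p : ℤ) {R : Type*} [Ring R] (w : Fin 6 → R) : Fin 6 → R :=
  ![w 0 - (p : R) * w 2, w 1, w 2, (p : R) * w 1 + w 3, w 4, w 5]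

/-- `φ : L → L`, identity on the two `ℤ⁸` factors. -/
def phiZ (p : ℤ) (d : LZ) : LZ := (phi6 p d.1, d.2.1, d.2.2)

/-- The `ℝ`-linear extension of `φ`. -/
def phiR (p : ℤ) (w : LR) : LR := (phi6 p w.1, w.2.1, w.2.2)

/-- `ψ` on the `ℤ⁶`/`ℝ⁶` factor: `u ↦ u`, `v ↦ v + q·t`, `x ↦ x − n·z + q·n·u`,
`y ↦ y`, `z ↦ z − q·u`, `t ↦ t + n·y` (in coordinates). -/
def psi6 (n q : ℤ) {R : Type*} [Ring R] (w : Fin 6 → R) : Fin 6 → R :=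
  ![w 0 + (q : R) * (n : R) * w 2 - (q : R) * w 4, w 1, w 2,
    w 3 + (n : R) * w 5, w 4 - (n : R) * w 2, (q : R) * w 1 + w 5]

/-- `ψ : L → L`, identity on the two `ℤ⁸` factors. -/
def psiZ (n q : ℤ) (d : LZ) : LZ := (psi6 n q d.1, d.2.1, d.2.2)

/-- The `ℝ`-linear extension of `ψ`. -/
def psiR (n q : ℤ) (w : LR) : LR := (psi6 n q w.1, w.2.1, w.2.2)

/-- `f₁(s,r) = 2u + v + s·y + r·t`. -/
def f1 (s r : ℝ) : LR := (![2, 1, 0, s, 0, r], 0, 0)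

/-- `f₂(s,r) = q·x + (n·r² − q·s)·u − n·r·z + 2q·y + a`, where `a = (0, e)`. -/
def f2 (n q : ℤ) (e : Fin 8 → ℝ) (s r : ℝ) : LR :=
  (![(n : ℝ) * r ^ 2 - (q : ℝ) * s, 0, (q : ℝ), 2 * (q : ℝ), -((n : ℝ) * r), 0], 0, e)

/-- `f₃(s,r) = z − r·u + 2q²·t + 2nqr·y + b`, where `b = (e, 0)`. -/
def f3 (n q : ℤ) (e : Fin 8 → ℝ) (s r : ℝ) : LR :=
  (![-r, 0, 0, 2 * (n : ℝ) * (q : ℝ) * r, 1, 2 * (q : ℝ) ^ 2], e, 0)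

section
variable {R : Type*} [CommRing R]

def hyperbolicForm (w w' : Fin 6 → R) : R :=
  w 0 * w' 1 + w 1 * w' 0 + w 2 * w' 3 + w 3 * w' 2 + w 4 * w' 5 + w 5 * w' 4

theorem hyperbolicForm_phi6 (p : ℤ) (w w' : Fin 6 → R) :
    hyperbolicForm (phi6 p w) (phi6 p w') = hyperbolicForm w w' := by
  simp only [hyperbolicForm, phi6, Matrix.cons_val_zero, Matrix.cons_val_one, Matrix.cons_val]
  ring

theorem hyperbolicForm_psi6 (n q : ℤ) (w w' : Fin 6 → R) :
    hyperbolicForm (psi6 n q w) (psi6 n q w') = hyperbolicForm w w' := by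
  simp only [hyperbolicForm, psi6, Matrix.cons_val_zero, Matrix.cons_val_one, Matrix.cons_val]
  ring

theorem phi6_cons (p : ℤ) (a b c d e f : R) :
    phi6 p ![a, b, c, d, e, f] = ![a - p * c, b, c, p * b + d, e, f] := rfl

theorem psi6_cons (n q : ℤ) (a b c d e f : R) :
    psi6 n q ![a, b, c, d, e, f] =
      ![a + q * n * c - q * e, b, c, d + n * f, e - n * c, q * b + f] := rfl

end

theorem QZ_map_fst {g : (Fin 6 → ℤ) → Fin 6 → ℤ}
    (hg : ∀ w w', hyperbolicForm (g w) (g w') = hyperbolicForm w w') (d d' : LZ) :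
    QZ (g d.1, d.2) (g d'.1, d'.2) = QZ d d' := by
  show hyperbolicForm (g d.1) (g d'.1) - _ - _ = hyperbolicForm d.1 d'.1 - _ - _
  rw [hg]

section
variable (n p q : ℤ) (e : Fin 8 → ℝ) (s r : ℝ)

theorem phiR_f1 : phiR p (f1 s r) = f1 (s + p) r := by
  simp only [phiR, f1, phi6_cons, Prod.mk.injEq, Matrix.vecCons_inj, and_true, true_and]
  constructorm* _ ∧ _ <;> ring

theorem phiR_f2 : phiR p (f2 n q e s r) = f2 n q e (s + p) r := by
  simp only [phiR, f2, phi6_cons, Prod.mk.injEq, Matrix.vecCons_inj, and_true, true_and]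
  constructorm* _ ∧ _ <;> ring

theorem phiR_f3 : phiR p (f3 n q e s r) = f3 n q e (s + p) r := by
  simp only [phiR, f3, phi6_cons, Prod.mk.injEq, Matrix.vecCons_inj, and_true, true_and]
  constructorm* _ ∧ _ <;> ring

theorem psiR_f1 : psiR n q (f1 s r) = f1 (s + n * r) (r + q) := by
  simp only [psiR, f1, psi6_cons, Prod.mk.injEq, Matrix.vecCons_inj, and_true, true_and]
  constructorm* _ ∧ _ <;> ring

theorem psiR_f2 : psiR n q (f2 n q e s r) = f2 n q e (s + n * r) (r + q) := by
  simp only [psiR, f2, psi6_cons, Prod.mk.injEq, Matrix.vecCons_inj, and_true, true_and]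
  constructorm* _ ∧ _ <;> ring

theorem psiR_f3 : psiR n q (f3 n q e s r) = f3 n q e (s + n * r) (r + q) := by
  simp only [psiR, f3, psi6_cons, Prod.mk.injEq, Matrix.vecCons_inj, and_true, true_and]
  constructorm* _ ∧ _ <;> ring

end

theorem statement11_general (e : Fin 8 → ℝ) (n p q : ℤ) :
    (∀ d d' : LZ, QZ (phiZ p d) (phiZ p d') = QZ d d') ∧
    (∀ d d' : LZ, QZ (psiZ n q d) (psiZ n q d') = QZ d d') ∧
    (∀ s r : ℝ,
      (phiR p (f1 s r) = f1 (s + (p : ℝ)) r ∧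
        phiR p (f2 n q e s r) = f2 n q e (s + (p : ℝ)) r ∧
        phiR p (f3 n q e s r) = f3 n q e (s + (p : ℝ)) r) ∧
      (psiR n q (f1 s r) = f1 (s + (n : ℝ) * r) (r + (q : ℝ)) ∧
        psiR n q (f2 n q e s r) = f2 n q e (s + (n : ℝ) * r) (r + (q : ℝ)) ∧
        psiR n q (f3 n q e s r) = f3 n q e (s + (n : ℝ) * r) (r + (q : ℝ)))) :=
  ⟨QZ_map_fst (hyperbolicForm_phi6 p), QZ_map_fst (hyperbolicForm_psi6 n q), fun s r =>
    ⟨⟨phiR_f1 p s r, phiR_f2 n p q e s r, phiR_f3 n p q e s r⟩,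
      psiR_f1 n q s r, psiR_f2 n q e s r, psiR_f3 n q e s r⟩⟩

/-- `φ` and `ψ` are isometries of `(L, Q)` and their `ℝ`-linear extensions satisfy
`φ(fᵢ(s,r)) = fᵢ(s+p,r)` and `ψ(fᵢ(s,r)) = fᵢ(s+nr,r+q)` for `i = 1, 2, 3`. -/
theorem statement11 (e : Fin 8 → ℝ) (n p q : ℤ) (hn : 1 ≤ n) (hp : 1 ≤ p) (hq : 1 ≤ q) :
    (∀ d d' : LZ, QZ (phiZ p d) (phiZ p d') = QZ d d') ∧
    (∀ d d' : LZ, QZ (psiZ n q d) (psiZ n q d') = QZ d d') ∧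
    (∀ s r : ℝ,
      (phiR p (f1 s r) = f1 (s + (p : ℝ)) r ∧
        phiR p (f2 n q e s r) = f2 n q e (s + (p : ℝ)) r ∧
        phiR p (f3 n q e s r) = f3 n q e (s + (p : ℝ)) r) ∧
      (psiR n q (f1 s r) = f1 (s + (n : ℝ) * r) (r + (q : ℝ)) ∧
        psiR n q (f2 n q e s r) = f2 n q e (s + (n : ℝ) * r) (r + (q : ℝ)) ∧
        psiR n q (f3 n q e s r) = f3 n q e (s + (n : ℝ) * r) (r + (q : ℝ)))) :=
  statement11_general e n p q
end

section
/- Assume |(e,e)| ≤ 1/2, where (e,e) = −eᵀCe. Then for every (s,r) ∈ ℝ²: Q(f₁(s,r),f₁(s,r)) = 4 > 0, Q(f₂(s,r),f₂(s,r)) = 4q² + (e,e) > 0, Q(f₃(s,r),f₃(s,r)) = 4q² + (e,e) > 0, and Q(f₂(s,r),f₃(s,r)) = Q(f₁(s,r),f₂(s,r)) = Q(f₁(s,r),f₃(s,r)) = 0. -/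
open scoped BigOperators

lemma pairCR_zero_left (w : Fin 8 → ℝ) : pairCR 0 w = 0 := by
  simp [pairCR]

lemma pairCR_zero_right (w : Fin 8 → ℝ) : pairCR w 0 = 0 := by
  simp [pairCR]

section Gram

variable (n q : ℤ) (e : Fin 8 → ℝ) (s r : ℝ)

lemma QR_f1_self : QR (f1 s r) (f1 s r) = 4 := by
  simp only [QR, f1, Matrix.cons_val_zero, Matrix.cons_val_one, Matrix.cons_val,
    pairCR_zero_left]
  ring

lemma QR_f2_self : QR (f2 n q e s r) (f2 n q e s r) = 4 * (q : ℝ) ^ 2 + innE8R e e := by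
  simp only [QR, f2, innE8R, Matrix.cons_val_zero, Matrix.cons_val_one, Matrix.cons_val,
    pairCR_zero_left]
  ring

lemma QR_f3_self : QR (f3 n q e s r) (f3 n q e s r) = 4 * (q : ℝ) ^ 2 + innE8R e e := by
  simp only [QR, f3, innE8R, Matrix.cons_val_zero, Matrix.cons_val_one, Matrix.cons_val,
    pairCR_zero_left]
  ring

-- `a` and `b` lie in different `E₈` summands, so they do not pair.
lemma QR_f2_f3 : QR (f2 n q e s r) (f3 n q e s r) = 0 := by
  simp only [QR, f2, f3, Matrix.cons_val_zero, Matrix.cons_val_one, Matrix.cons_val,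
    pairCR_zero_left, pairCR_zero_right]
  ring

lemma QR_f1_f2 : QR (f1 s r) (f2 n q e s r) = 0 := by
  simp only [QR, f1, f2, Matrix.cons_val_zero, Matrix.cons_val_one, Matrix.cons_val,
    pairCR_zero_left]
  ring

lemma QR_f1_f3 : QR (f1 s r) (f3 n q e s r) = 0 := by
  simp only [QR, f1, f3, Matrix.cons_val_zero, Matrix.cons_val_one, Matrix.cons_val,
    pairCR_zero_left]
  ring

end Gram

lemma four_mul_sq_add_pos {q c : ℝ} (hq : 1 ≤ q) (hc : |c| ≤ 1 / 2) : 0 < 4 * q ^ 2 + c := by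
  nlinarith [neg_abs_le c]

theorem statement12_general (e : Fin 8 → ℝ) (he : |innE8R e e| ≤ 1 / 2)
    (n q : ℤ) (hq : 1 ≤ q) (s r : ℝ) :
    (QR (f1 s r) (f1 s r) = 4 ∧ 0 < QR (f1 s r) (f1 s r)) ∧
    (QR (f2 n q e s r) (f2 n q e s r) = 4 * (q : ℝ) ^ 2 + innE8R e e ∧
      0 < QR (f2 n q e s r) (f2 n q e s r)) ∧
    (QR (f3 n q e s r) (f3 n q e s r) = 4 * (q : ℝ) ^ 2 + innE8R e e ∧
      0 < QR (f3 n q e s r) (f3 n q e s r)) ∧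
    QR (f2 n q e s r) (f3 n q e s r) = 0 ∧ QR (f1 s r) (f2 n q e s r) = 0 ∧
    QR (f1 s r) (f3 n q e s r) = 0 := by
  have hpos : 0 < 4 * (q : ℝ) ^ 2 + innE8R e e := four_mul_sq_add_pos (by exact_mod_cast hq) he
  rw [QR_f1_self, QR_f2_self, QR_f3_self, QR_f2_f3, QR_f1_f2, QR_f1_f3]
  exact ⟨⟨rfl, four_pos⟩, ⟨rfl, hpos⟩, ⟨rfl, hpos⟩, rfl, rfl, rfl⟩

/-- If `|(e,e)| ≤ 1/2` then for every `(s,r) ∈ ℝ²`: `Q(f₁,f₁) = 4 > 0`,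
`Q(f₂,f₂) = Q(f₃,f₃) = 4q² + (e,e) > 0`, and `Q(f₂,f₃) = Q(f₁,f₂) = Q(f₁,f₃) = 0`. -/
theorem statement12 (e : Fin 8 → ℝ) (he : |innE8R e e| ≤ 1 / 2)
    (n p q : ℤ) (hn : 1 ≤ n) (hp : 1 ≤ p) (hq : 1 ≤ q) (s r : ℝ) :
    (QR (f1 s r) (f1 s r) = 4 ∧ 0 < QR (f1 s r) (f1 s r)) ∧
    (QR (f2 n q e s r) (f2 n q e s r) = 4 * (q : ℝ) ^ 2 + innE8R e e ∧
      0 < QR (f2 n q e s r) (f2 n q e s r)) ∧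
    (QR (f3 n q e s r) (f3 n q e s r) = 4 * (q : ℝ) ^ 2 + innE8R e e ∧
      0 < QR (f3 n q e s r) (f3 n q e s r)) ∧
    QR (f2 n q e s r) (f3 n q e s r) = 0 ∧ QR (f1 s r) (f2 n q e s r) = 0 ∧
    QR (f1 s r) (f3 n q e s r) = 0 :=
  statement12_general e he n q hq s r
end
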